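/- Asynchronous knowledge satisfies negative introspection: ¬K_a φ → K_a ¬K_a φ is valid on all asynchronous models. -/

import Mathlib

/-- Formulas of asynchronous announcement logic over agents `A` and atoms `P`.
`⊥` is included as a primitive for convenience (it is an abbreviation in the paper). -/
inductive Form (A P : Type) : Type where
  | bot  : Form A P
  | atom : P → Form A P
  | neg  : Form A P → Form A P
  | and  : Form A P → Form A P → Form A P
  | know : A → Form A P → Form A P
  | ann  : Form A P → Form A P → Form A P
  | next : A → Form A P → Form A P

namespace Form

def size {A P : Type} : Form A P → ℕ
  | bot => 1
  | atom _ => 1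
  | neg φ => φ.size + 1
  | and φ ψ => φ.size + ψ.size + 1
  | know _ φ => φ.size + 1
  | ann φ ψ => φ.size + ψ.size + 1
  | next _ φ => φ.size + 1

theorem size_pos {A P : Type} (φ : Form A P) : 1 ≤ φ.size := by
  cases φ <;> simp [size]

end Form

/-- An epistemic frame with valuation: equivalence relations `∼ₐ` and a valuation. -/
structure Frame (A P S : Type) where
  rel : A → S → S → Prop
  equiv : ∀ a, Equivalence (rel a)
  val : P → Set S

/-- `g ≤ₐ f` between cuts. -/
def cutLE {A : Type} (a : A) (g f : A → ℕ) : Prop :=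
  g a = f a ∧ ∀ b, b ≠ a → g b ≤ f a

/-- `f⁺ᵃ`: increment the cut `f` at agent `a`. -/
def inc {A : Type} [DecidableEq A] (a : A) (f : A → ℕ) : A → ℕ :=
  fun b => if b = a then f a + 1 else f b

def histSize {A P : Type} (σ : List (Form A P)) : ℕ := (σ.map Form.size).sum

mutual
/-- Truth in an asynchronous (pre-)model.  The announcement history `σ` is stored
with the most recent announcement first; `f` is the cut, `s` the state. -/
def Sat {A P S : Type} [DecidableEq A] (F : Frame A P S) : List (Form A P) → (A → ℕ) → S → Form A P → Prop
  | _, _, _, .bot => False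
  | _, _, s, .atom p => s ∈ F.val p
  | σ, f, s, .neg φ => ¬ Sat F σ f s φ
  | σ, f, s, .and φ ψ => Sat F σ f s φ ∧ Sat F σ f s ψ
  | σ, f, s, .know a φ =>
      ∀ t g, F.rel a s t → cutLE a g f → Good F σ g t → Sat F σ g t φ
  | σ, f, s, .ann ψ χ => Sat F σ f s ψ → Sat F (ψ :: σ) f s χ
  | σ, f, s, .next a φ => f a < σ.length → Sat F σ (inc a f) s φ
termination_by σ _ _ φ => histSize σ + φ.size
decreasing_by
  all_goals simp_all [histSize, Form.size]
  all_goals first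
    | omega
    | (have := Form.size_pos φ; omega)

/-- `(S,∼,V,s,σ,f)` is an asynchronous model (the history together with the cut
can be generated by truthful announcements and receptions). -/
def Good {A P S : Type} [DecidableEq A] (F : Frame A P S) : List (Form A P) → (A → ℕ) → S → Prop
  | [], f, _ => ∀ a, f a = 0
  | ψ :: σ, f, s =>
      (∀ a, f a ≤ σ.length + 1) ∧
      ∃ f', (∀ a, f' a ≤ f a) ∧ Good F σ f' s ∧ Sat F σ f' s ψ
termination_by σ _ _ => histSize σ + 1
decreasing_by
  all_goals simp_all [histSize, Form.size]
  all_goals (have := Form.size_pos ψ; omega)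
end

theorem cutLE_euclidean {A : Type} {a : A} {f g h : A → ℕ}
    (hg : cutLE a g f) (hh : cutLE a h f) : cutLE a h g :=
  ⟨hh.1.trans hg.1.symm, fun b hb => hg.1 ▸ hh.2 b hb⟩

/-- Both `∼ₐ` and `≤ₐ` are Euclidean, so every point `a`-accessible from `(t, g)` is
`a`-accessible from `(s, f)`. -/
theorem Sat.know_of_rel_of_cutLE {A P S : Type} [DecidableEq A] {F : Frame A P S}
    {σ : List (Form A P)} {a : A} {φ : Form A P} {f g : A → ℕ} {s t : S}
    (hst : F.rel a s t) (hgf : cutLE a g f) (hk : Sat F σ g t (.know a φ)) :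
    Sat F σ f s (.know a φ) := by
  rw [Sat] at hk ⊢
  intro u h hsu hhf hu
  exact hk u h ((F.equiv a).trans ((F.equiv a).symm hst) hsu) (cutLE_euclidean hgf hhf) hu

/-- Asynchronous knowledge satisfies negative introspection: `¬Kₐ φ → Kₐ ¬Kₐ φ` is valid
on all asynchronous models. -/
theorem know_five {A P : Type} [DecidableEq A] [Fintype A] [Countable P]
    (a : A) (φ : Form A P) :
    ∀ (S : Type) (F : Frame A P S) (σ : List (Form A P)) (f : A → ℕ) (s : S),
      Good F σ f s →
      ¬ Sat F σ f s (.know a φ) → Sat F σ f s (.know a (.neg (.know a φ))) := by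
  intro S F σ f s _ hnk
  rw [Sat]
  intro t g hst hgf _
  rw [Sat]
  exact fun hk => hnk (Sat.know_of_rel_of_cutLE hst hgf hk)
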